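/- arXiv:2209.12235 — 4 statements merged into one kernel-verified Lean document; each statement's English description precedes it below -/
import Mathlib

section
/- Let g > 0 and h₀ > 0. If h > h₀ then the rarefaction function f_R(h;h₀) = 2*(sqrt(g*h) - sqrt(g*h₀)) is strictly less than the shock function f_S(h;h₀) = (h - h₀)*sqrt((g/2)*(h + h₀)/(h*h₀)). -/
theorem stmt_2 (g h₀ h : ℝ) (hg : 0 < g) (hh₀ : 0 < h₀) (hh : h₀ < h) :
    2 * (Real.sqrt (g * h) - Real.sqrt (g * h₀)) <
      (h - h₀) * Real.sqrt ((g / 2) * (h + h₀) / (h * h₀)) := by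
  have hh' : 0 < h := hh₀.trans hh
  set t := Real.sqrt (h * h₀) with htdef
  have ht0 : 0 < t := Real.sqrt_pos.mpr (by positivity)
  have ht2 : t ^ 2 = h * h₀ := Real.sq_sqrt (by positivity)
  -- √h ≠ √h₀
  have hsh : Real.sqrt h₀ < Real.sqrt h := Real.sqrt_lt_sqrt hh₀.le hh
  have hmul : Real.sqrt h * Real.sqrt h₀ = t := (Real.sqrt_mul hh'.le h₀).symm
  have hq1 : Real.sqrt h ^ 2 = h := Real.sq_sqrt hh'.le
  have hq2 : Real.sqrt h₀ ^ 2 = h₀ := Real.sq_sqrt hh₀.le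
  have hp : 2 * t < h + h₀ := by
    nlinarith [sq_nonneg (Real.sqrt h - Real.sqrt h₀), hsh]
  -- product of sqrts for g
  have hgh : Real.sqrt (g * h) * Real.sqrt (g * h₀) = g * t := by
    rw [← Real.sqrt_mul (by positivity)]
    have : g * h * (g * h₀) = g ^ 2 * (h * h₀) := by ring
    rw [this, Real.sqrt_mul (by positivity), Real.sqrt_sq hg.le]
  have hq3 : Real.sqrt (g * h) ^ 2 = g * h := Real.sq_sqrt (by positivity)
  have hq4 : Real.sqrt (g * h₀) ^ 2 = g * h₀ := Real.sq_sqrt (by positivity)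
  have hq5 : Real.sqrt ((g / 2) * (h + h₀) / (h * h₀)) ^ 2
      = (g / 2) * (h + h₀) / (h * h₀) := Real.sq_sqrt (by positivity)
  have hlhs0 : 0 ≤ 2 * (Real.sqrt (g * h) - Real.sqrt (g * h₀)) := by
    have := Real.sqrt_le_sqrt (le_of_lt (by nlinarith : g * h₀ < g * h))
    linarith
  have hsq : (2 * (Real.sqrt (g * h) - Real.sqrt (g * h₀))) ^ 2 <
      ((h - h₀) * Real.sqrt ((g / 2) * (h + h₀) / (h * h₀))) ^ 2 := by
    have hpt : 0 < h + h₀ - 2 * t := by linarith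
    have key : 0 < (h + h₀ - 2 * t) ^ 2 * (h + h₀ + 4 * t) := by positivity
    have expand : ((h - h₀) * Real.sqrt ((g / 2) * (h + h₀) / (h * h₀))) ^ 2
        = (h - h₀) ^ 2 * ((g / 2) * (h + h₀) / (h * h₀)) := by
      rw [mul_pow, hq5]
    rw [expand]
    have hlhs : (2 * (Real.sqrt (g * h) - Real.sqrt (g * h₀))) ^ 2
        = 4 * g * (h + h₀ - 2 * t) := by
      have : (2 * (Real.sqrt (g * h) - Real.sqrt (g * h₀))) ^ 2
          = 4 * (Real.sqrt (g * h) ^ 2 + Real.sqrt (g * h₀) ^ 2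
            - 2 * (Real.sqrt (g * h) * Real.sqrt (g * h₀))) := by ring
      rw [this, hq3, hq4, hgh]; ring
    rw [hlhs]
    have hhh : 0 < h * h₀ := by positivity
    have : (h - h₀) ^ 2 * ((g / 2) * (h + h₀) / (h * h₀))
        = ((h - h₀) ^ 2 * (g / 2) * (h + h₀)) / (h * h₀) := by ring
    rw [this, lt_div_iff₀ hhh]
    nlinarith [key, ht2, ht0, hp, mul_pos hg hhh, mul_pos (mul_pos hg hhh) hpt]
  have hrhs0 : 0 ≤ (h - h₀) * Real.sqrt ((g / 2) * (h + h₀) / (h * h₀)) :=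
    mul_nonneg (by linarith) (Real.sqrt_nonneg _)
  exact lt_of_pow_lt_pow_left₀ 2 hrhs0 hsq
end

section
/- For fixed g > 0 and h₀ > 0, the shallow water wave function f(h;h₀), defined piecewise as f(h;h₀) = 2*(sqrt(g*h) - sqrt(g*h₀)) for 0 < h ≤ h₀ and f(h;h₀) = (h - h₀)*sqrt((g/2)*(h + h₀)/(h*h₀)) for h > h₀, is continuous and strictly increasing on (0,∞). -/
noncomputable def swWave (g h₀ : ℝ) : ℝ → ℝ := fun h =>
  if h ≤ h₀ then 2 * (Real.sqrt (g * h) - Real.sqrt (g * h₀))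
  else (h - h₀) * Real.sqrt ((g / 2) * (h + h₀) / (h * h₀))

theorem stmt_3 (g h₀ : ℝ) (hg : 0 < g) (hh₀ : 0 < h₀) :
    ContinuousOn (swWave g h₀) (Set.Ioi 0) ∧ StrictMonoOn (swWave g h₀) (Set.Ioi 0) := by
  constructor
  · -- continuity
    apply ContinuousOn.if
    · intro a ha
      have : a ∈ Set.Ioi (0:ℝ) ∩ frontier (Set.Iic h₀) := ha
      rw [frontier_Iic] at this
      have ha' : a = h₀ := this.2
      subst ha'
      simp
    · exact (continuous_const.mul ((Real.continuous_sqrt.comp (continuous_const.mul continuous_id)).sub continuous_const)).continuousOn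
    · have hsub : Set.Ioi (0:ℝ) ∩ closure {a : ℝ | ¬ a ≤ h₀} ⊆ {x : ℝ | x ≠ 0} := by
        intro x hx
        exact ne_of_gt hx.1
      apply ContinuousOn.mul
      · exact (continuous_id.sub continuous_const).continuousOn
      · apply ContinuousOn.sqrt
        apply ContinuousOn.div
        · exact (continuous_const.mul (continuous_id.add continuous_const)).continuousOn
        · exact (continuous_id.mul continuous_const).continuousOn
        · intro x hx
          have hx0 : x ≠ 0 := hsub hx
          positivity
  · -- monotonicity
    intro x hx y hy hxy
    have hx0 : (0:ℝ) < x := hx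
    have hy0 : (0:ℝ) < y := hy
    by_cases hyh : y ≤ h₀
    · -- both in first branch
      have hxh : x ≤ h₀ := le_of_lt (lt_of_lt_of_le hxy hyh)
      simp only [swWave, if_pos hxh, if_pos hyh]
      have : Real.sqrt (g * x) < Real.sqrt (g * y) :=
        Real.sqrt_lt_sqrt (by positivity) (by nlinarith)
      linarith
    · push_neg at hyh
      by_cases hxh : x ≤ h₀
      · -- x first branch ≤ 0 < y second branch
        simp only [swWave, if_pos hxh, if_neg (not_le.mpr hyh)]
        have h1 : Real.sqrt (g * x) ≤ Real.sqrt (g * h₀) :=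
          Real.sqrt_le_sqrt (by nlinarith)
        have h2 : (0:ℝ) < (y - h₀) * Real.sqrt ((g / 2) * (y + h₀) / (y * h₀)) :=
          mul_pos (by linarith) (Real.sqrt_pos.mpr (by positivity))
        linarith
      · -- both in second branch
        push_neg at hxh
        simp only [swWave, if_neg (not_le.mpr (lt_trans hxh hxy)), if_neg (not_le.mpr hxh)]
        set Ax := (g / 2) * (x + h₀) / (x * h₀) with hAx
        set Ay := (g / 2) * (y + h₀) / (y * h₀) with hAy
        have hAx0 : 0 ≤ Ax := by positivity
        have hAy0 : 0 ≤ Ay := by positivity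
        have hfx : 0 ≤ (x - h₀) * Real.sqrt Ax := by
          apply mul_nonneg (by linarith) (Real.sqrt_nonneg _)
        have hfy : 0 ≤ (y - h₀) * Real.sqrt Ay := by
          apply mul_nonneg (by linarith) (Real.sqrt_nonneg _)
        have hsq : ((x - h₀) * Real.sqrt Ax) ^ 2 < ((y - h₀) * Real.sqrt Ay) ^ 2 := by
          rw [mul_pow, mul_pow, Real.sq_sqrt hAx0, Real.sq_sqrt hAy0, hAx, hAy]
          rw [← mul_div_assoc, ← mul_div_assoc,
            div_lt_div_iff₀ (by positivity) (by positivity)]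
          have h1 : h₀ * h₀ < x * y := by nlinarith
          have h2 : (0:ℝ) < x + y - h₀ := by linarith
          have hA : h₀ ^ 3 < x * y * (x + y - h₀) := by
            have t1 := mul_lt_mul_of_pos_right h1 h2
            nlinarith [mul_lt_mul_of_pos_left (show h₀ < x + y - h₀ by linarith)
              (mul_pos hh₀ hh₀)]
          have key : y * ((x - h₀) ^ 2 * (x + h₀)) < x * ((y - h₀) ^ 2 * (y + h₀)) := by
            nlinarith [mul_pos (show (0:ℝ) < y - x by linarith)
              (show (0:ℝ) < x * y * (x + y - h₀) - h₀ ^ 3 by linarith)]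
          have hc : (0:ℝ) < g / 2 * h₀ := by positivity
          nlinarith [mul_lt_mul_of_pos_left key hc]
        exact lt_of_pow_lt_pow_left₀ 2 (by positivity) hsq
end

section
/- Let g > 0, h_ℓ, h_r > 0, u_ℓ, u_r ∈ ℝ, and let φ be the shallow water depth function φ(h) = f(h;h_ℓ) + f(h;h_r) + u_r − u_ℓ. Then lim_{h→0⁺} φ(h) = u_r − u_ℓ − 2*sqrt(g*h_ℓ) − 2*sqrt(g*h_r), and φ(h) → +∞ as h → ∞. Consequently, if u_r − u_ℓ < 2*sqrt(g*h_ℓ) + 2*sqrt(g*h_r), then φ has a unique positive root h*. -/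
noncomputable def swDepthFun (g hl hr ul ur : ℝ) : ℝ → ℝ := fun h =>
  swWave g hl h + swWave g hr h + ur - ul

/-!
On `h ≤ h₀` the wave curve `swWave g h₀` is the rarefaction branch `2(√(gh) - √(gh₀))`, plainly
increasing and equal to `-2√(gh₀)` at `h = 0`. On `h ≥ h₀` the shock branch is
`√(g/(2h₀) · (h - h₀)(h - h₀²/h))`, a square root of a product of two nonnegative increasing
functions that tend to `+∞`. The two branches meet continuously at `h₀`, so `φ` is continuous and
strictly increasing on `(0, ∞)`, runs from `uᵣ - uₗ - 2√(ghₗ) - 2√(ghᵣ)` up to `+∞`, and the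
intermediate value theorem gives exactly one positive root when that lower limit is negative.
-/

open Real Set Filter Topology

theorem StrictMonoOn.existsUnique_eq_of_tendsto_Ioi {X α : Type*}
    [ConditionallyCompleteLinearOrder X] [TopologicalSpace X] [OrderTopology X]
    [DenselyOrdered X] [NoMaxOrder X]
    [LinearOrder α] [TopologicalSpace α] [OrderClosedTopology α]
    {f : X → α} {a : X} {L y : α} (hmono : StrictMonoOn f (Ioi a))
    (hcont : ContinuousOn f (Ioi a)) (hL : Tendsto f (𝓝[>] a) (𝓝 L))
    (htop : Tendsto f atTop atTop) (hy : L < y) :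
    ∃! x, a < x ∧ f x = y := by
  obtain ⟨x, hx, rfl⟩ := isPreconnected_Ioi.intermediate_value_Ioi
    (le_principal_iff.2 self_mem_nhdsWithin) (le_principal_iff.2 (Ioi_mem_atTop a))
    hcont hL htop hy
  exact ⟨x, ⟨hx, rfl⟩, fun x' hx' => hmono.injOn hx'.1 hx hx'.2⟩

namespace swWave

variable {g h₀ h : ℝ}

lemma of_le (hh : h ≤ h₀) : swWave g h₀ h = 2 * (√(g * h) - √(g * h₀)) := if_pos hh

lemma of_lt (hh : h₀ < h) : swWave g h₀ h = (h - h₀) * √((g / 2) * (h + h₀) / (h * h₀)) :=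
  if_neg hh.not_ge

lemma eq_sqrt_of_le (hh₀ : 0 < h₀) (hh : h₀ ≤ h) :
    swWave g h₀ h = √(g / (2 * h₀) * ((h - h₀) * (h - h₀ ^ 2 / h))) := by
  rcases hh.eq_or_lt with rfl | hh
  · simp [of_le le_rfl]
  have : 0 < h := hh₀.trans hh
  have : g / (2 * h₀) * ((h - h₀) * (h - h₀ ^ 2 / h))
      = (h - h₀) ^ 2 * ((g / 2) * (h + h₀) / (h * h₀)) := by
    field_simp
    ring
  rw [this, sqrt_mul (sq_nonneg _), sqrt_sq (sub_pos.2 hh).le, of_lt hh]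

lemma continuousOn (hh₀ : 0 < h₀) : ContinuousOn (swWave g h₀) (Ioi 0) := by
  refine ContinuousOn.if ?_ (by fun_prop) ?_
  · intro a ⟨_, ha⟩
    have : a = h₀ := by simpa using frontier_Iic_subset h₀ ha
    simp [this]
  · have : {a : ℝ | ¬a ≤ h₀} = Ioi h₀ := by ext; simp
    rw [this, closure_Ioi]
    intro a ⟨ha, _⟩
    have : a ≠ 0 := (mem_Ioi.1 ha).ne'
    have : a * h₀ ≠ 0 := by positivity
    fun_prop (disch := assumption)

lemma strictMonoOn (hg : 0 < g) (hh₀ : 0 < h₀) : StrictMonoOn (swWave g h₀) (Ioi 0) := by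
  have rarefaction : StrictMonoOn (swWave g h₀) (Icc 0 h₀) := by
    intro a ⟨_, ha⟩ b ⟨_, hb⟩ hab
    simp only [of_le ha, of_le hb]
    gcongr
  have shock : StrictMonoOn (swWave g h₀) (Ici h₀) := by
    intro a (ha : h₀ ≤ a) b (hb : h₀ ≤ b) hab
    have : 0 < a := hh₀.trans_le ha
    have : h₀ ^ 2 / a ≤ a := by
      rw [div_le_iff₀ this]
      nlinarith
    rw [eq_sqrt_of_le hh₀ ha, eq_sqrt_of_le hh₀ hb]
    gcongr
  refine (rarefaction.union shock (isGreatest_Icc hh₀.le) isLeast_Ici).mono fun h hh => ?_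
  exact (le_total h h₀).imp (fun h' => ⟨le_of_lt hh, h'⟩) id

lemma tendsto_nhdsGT_zero (hh₀ : 0 < h₀) :
    Tendsto (swWave g h₀) (𝓝[>] 0) (𝓝 (-(2 * √(g * h₀)))) := by
  have hc : Continuous fun h => 2 * (√(g * h) - √(g * h₀)) := by fun_prop
  refine ((hc.tendsto 0).mono_left nhdsWithin_le_nhds).congr' ?_ |>.trans (by simp)
  filter_upwards [nhdsWithin_le_nhds (Iio_mem_nhds hh₀)] with h hh
  exact (of_le (le_of_lt hh)).symm

lemma tendsto_atTop (hg : 0 < g) (hh₀ : 0 < h₀) : Tendsto (swWave g h₀) atTop atTop := by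
  have hprod : Tendsto (fun h => g / (2 * h₀) * ((h - h₀) * (h - h₀ ^ 2 / h))) atTop atTop := by
    refine .const_mul_atTop (by positivity) (.atTop_mul_atTop₀ ?_ ?_)
    · exact tendsto_atTop_add_const_right _ _ tendsto_id
    · simpa only [id, sub_eq_add_neg] using
        tendsto_id.atTop_add (tendsto_const_nhds.div_atTop tendsto_id).neg
  refine (tendsto_sqrt_atTop.comp hprod).congr' ?_
  filter_upwards [eventually_ge_atTop h₀] with h hh
  exact (eq_sqrt_of_le hh₀ hh).symm

end swWave

namespace swDepthFun

variable {g hl hr ul ur : ℝ}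

lemma tendsto_nhdsGT_zero (hhl : 0 < hl) (hhr : 0 < hr) :
    Tendsto (swDepthFun g hl hr ul ur) (𝓝[>] 0)
      (𝓝 (ur - ul - 2 * √(g * hl) - 2 * √(g * hr))) := by
  convert (((swWave.tendsto_nhdsGT_zero (g := g) hhl).add
    (swWave.tendsto_nhdsGT_zero (g := g) hhr)).add_const ur).sub_const ul using 2
  · rfl
  ring

lemma tendsto_atTop (hg : 0 < g) (hhl : 0 < hl) (hhr : 0 < hr) :
    Tendsto (swDepthFun g hl hr ul ur) atTop atTop :=
  tendsto_atTop_add_const_right _ _ <| tendsto_atTop_add_const_right _ _ <|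
    (swWave.tendsto_atTop hg hhl).atTop_add_atTop (swWave.tendsto_atTop hg hhr)

lemma strictMonoOn (hg : 0 < g) (hhl : 0 < hl) (hhr : 0 < hr) :
    StrictMonoOn (swDepthFun g hl hr ul ur) (Ioi 0) := fun a ha b hb hab => by
  have := swWave.strictMonoOn hg hhl ha hb hab
  have := swWave.strictMonoOn hg hhr ha hb hab
  simp only [swDepthFun]
  linarith

lemma continuousOn (hhl : 0 < hl) (hhr : 0 < hr) :
    ContinuousOn (swDepthFun g hl hr ul ur) (Ioi 0) :=
  (((swWave.continuousOn hhl).add (swWave.continuousOn hhr)).add continuousOn_const).sub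
    continuousOn_const

end swDepthFun

theorem stmt_11 (g hl hr ul ur : ℝ) (hg : 0 < g) (hhl : 0 < hl) (hhr : 0 < hr) :
    Filter.Tendsto (swDepthFun g hl hr ul ur) (nhdsWithin 0 (Set.Ioi 0))
      (nhds (ur - ul - 2 * Real.sqrt (g * hl) - 2 * Real.sqrt (g * hr))) ∧
    Filter.Tendsto (swDepthFun g hl hr ul ur) Filter.atTop Filter.atTop ∧
    (ur - ul < 2 * Real.sqrt (g * hl) + 2 * Real.sqrt (g * hr) →
      ∃! h : ℝ, 0 < h ∧ swDepthFun g hl hr ul ur h = 0) := by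
  have hzero := swDepthFun.tendsto_nhdsGT_zero (g := g) (ul := ul) (ur := ur) hhl hhr
  have htop := swDepthFun.tendsto_atTop (ul := ul) (ur := ur) hg hhl hhr
  refine ⟨hzero, htop, fun hsub => ?_⟩
  exact (swDepthFun.strictMonoOn hg hhl hhr).existsUnique_eq_of_tendsto_Ioi
    (swDepthFun.continuousOn hhl hhr) hzero htop (by linarith)
end

section
/- Under the depth-positivity condition, the unique positive root h* of the shallow water depth function φ satisfies h* ≤ h_RR, where h_RR = (u_ℓ − u_r + 2*sqrt(g*h_ℓ) + 2*sqrt(g*h_r))² / (16*g) is the two-rarefaction approximation. -/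
lemma swWave_ge (g h₀ h : ℝ) (hg : 0 < g) (h₀p : 0 < h₀) (hp : 0 < h) :
    2 * (Real.sqrt (g * h) - Real.sqrt (g * h₀)) ≤ swWave g h₀ h := by
  unfold swWave
  split_ifs with hle
  · exact le_refl _
  · push_neg at hle
    set a := Real.sqrt h with ha
    set b := Real.sqrt h₀ with hb
    set c := Real.sqrt g with hc
    have sga : Real.sqrt (g * h) = c * a := Real.sqrt_mul hg.le h
    have sgb : Real.sqrt (g * h₀) = c * b := Real.sqrt_mul hg.le h₀
    have ha2 : a ^ 2 = h := Real.sq_sqrt hp.le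
    have hb2 : b ^ 2 = h₀ := Real.sq_sqrt h₀p.le
    have hc2 : c ^ 2 = g := Real.sq_sqrt hg.le
    have hanz : 0 < a := Real.sqrt_pos.2 hp
    have hbnz : 0 < b := Real.sqrt_pos.2 h₀p
    have hcnz : 0 < c := Real.sqrt_pos.2 hg
    set r := Real.sqrt ((g / 2) * (h + h₀) / (h * h₀)) with hrdef
    have hrnn : 0 ≤ r := Real.sqrt_nonneg _
    have hr2 : r ^ 2 = (g / 2) * (h + h₀) / (h * h₀) := by
      apply Real.sq_sqrt
      positivity
    rw [sga, sgb]
    have hhh : h₀ < h := hle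
    have key2 : (2 * (c * a - c * b)) ^ 2 ≤ ((h - h₀) * r) ^ 2 := by
      have expand : ((h - h₀) * r) ^ 2 = (h - h₀) ^ 2 * ((g / 2) * (h + h₀) / (h * h₀)) := by
        rw [mul_pow, hr2]
      rw [expand]
      rw [← ha2, ← hb2, ← hc2]
      have hne : a ^ 2 * b ^ 2 ≠ 0 := by positivity
      have hdiff : (a ^ 2 - b ^ 2) ^ 2 * (c ^ 2 / 2 * (a ^ 2 + b ^ 2) / (a ^ 2 * b ^ 2))
          - (2 * (c * a - c * b)) ^ 2
          = (c ^ 2 * (a - b) ^ 2 * ((a - b) ^ 2 * (a ^ 2 + 4 * (a * b) + b ^ 2)))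
            / (2 * (a ^ 2 * b ^ 2)) := by
        field_simp
        ring
      have hnum : 0 ≤ (c ^ 2 * (a - b) ^ 2 * ((a - b) ^ 2 * (a ^ 2 + 4 * (a * b) + b ^ 2)))
            / (2 * (a ^ 2 * b ^ 2)) := by positivity
      linarith [hdiff, hnum]
    have hrhs : 0 ≤ (h - h₀) * r := mul_nonneg (by linarith) hrnn
    nlinarith [key2, hrhs, sq_nonneg (2 * (c * a - c * b) + (h - h₀) * r)]

theorem stmt_12 (g hl hr ul ur hstar : ℝ) (hg : 0 < g) (hhl : 0 < hl) (hhr : 0 < hr)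
    (hpos : ur - ul < 2 * Real.sqrt (g * hl) + 2 * Real.sqrt (g * hr))
    (hstarpos : 0 < hstar) (hroot : swDepthFun g hl hr ul ur hstar = 0) :
    hstar ≤ (ul - ur + 2 * Real.sqrt (g * hl) + 2 * Real.sqrt (g * hr)) ^ 2 / (16 * g) := by
  have h1 := swWave_ge g hl hstar hg hhl hstarpos
  have h2 := swWave_ge g hr hstar hg hhr hstarpos
  have hroot' : swWave g hl hstar + swWave g hr hstar + ur - ul = 0 := hroot
  set s := Real.sqrt (g * hstar) with hs
  have hs2 : s ^ 2 = g * hstar := Real.sq_sqrt (by positivity)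
  have hsnn : 0 ≤ s := Real.sqrt_nonneg _
  set A := ul - ur + 2 * Real.sqrt (g * hl) + 2 * Real.sqrt (g * hr) with hA
  have h4s : 4 * s ≤ A := by
    simp only [hA]
    linarith
  have hA0 : 0 < A := by simp only [hA]; linarith
  have : g * hstar ≤ A ^ 2 / 16 := by nlinarith
  rw [le_div_iff₀ (by positivity : (0:ℝ) < 16 * g)]
  nlinarith [this, hg]
end
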